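/- arXiv:2603.29865 — 2 statements merged into one kernel-verified Lean document; each statement's English description precedes it below -/
import Mathlib

section
/- Let G=(V,A) be a directed graph with positive arc costs, s,t ∈ V, h > 0, and S ⊆ V \ {s,t}. Suppose every vertex in S, when protected, adds delay Δ = h to all its outgoing arcs, and define the delayed arrival time a^S_t as the shortest s–t path cost where every arc leaving a vertex of S is increased by h. Then a^S_t ≥ h if and only if the shortest s–t path in the vertex-deleted subgraph G \ S has cost at least h. -/
/-!
The delay adds `h` once for every vertex of `S` that a path leaves. A path of `G \ S` leaves no
vertex of `S`, so its delayed and ordinary costs agree. A path of `G` that meets `S` does leave a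
vertex of `S`, since its endpoint `t` is not in `S`, so its delayed cost is at least `h` plus a
nonnegative cost.
-/

open scoped ENNReal

/-- `l` is a directed path from `u` to `v` along arc relation `A`. -/
def IsPathFrom {V : Type*} (A : V → V → Prop) (u v : V) (l : List V) : Prop :=
  l.head? = some u ∧ l.getLast? = some v ∧ l.Chain' A

/-- Total cost of a path: sum of arc costs over consecutive pairs. -/
def pathCost {V : Type*} (c : V → V → ℝ) (l : List V) : ℝ :=
  ((l.zip l.tail).map fun p => c p.1 p.2).sum

/-- Shortest-path distance from `u` to `v` (infimum of path costs, `⊤` if unreachable). -/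
noncomputable def gdist {V : Type*} (A : V → V → Prop) (c : V → V → ℝ) (u v : V) : ℝ≥0∞ :=
  ⨅ l : {l : List V // IsPathFrom A u v l}, ENNReal.ofReal (pathCost c l)

open Classical in
/-- Arc costs after protecting the vertices of `P`: every outgoing arc of a
protected vertex is delayed by `Δ`. -/
noncomputable def delCost {V : Type*} (c : V → V → ℝ) (P : Set V) (Δ : ℝ) : V → V → ℝ :=
  fun u v => c u v + (if u ∈ P then Δ else 0)

section

variable {V : Type*}

lemma pathCost_cons_cons (c : V → V → ℝ) (a b : V) (l : List V) :
    pathCost c (a :: b :: l) = c a b + pathCost c (b :: l) := by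
  simp [pathCost]

lemma pathCost_nonneg {A : V → V → Prop} {c : V → V → ℝ} (hc : ∀ u v, A u v → 0 ≤ c u v) :
    ∀ {l : List V}, l.IsChain A → 0 ≤ pathCost c l
  | [], _ | [_], _ => by simp [pathCost]
  | a :: b :: l, hl => by
    rw [List.isChain_cons_cons] at hl
    rw [pathCost_cons_cons]
    exact add_nonneg (hc a b hl.1) (pathCost_nonneg hc hl.2)

open Classical in
lemma pathCost_delCost (c : V → V → ℝ) (P : Set V) (Δ : ℝ) :
    ∀ l : List V, pathCost (delCost c P Δ) l = pathCost c l + l.dropLast.countP (· ∈ P) * Δ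
  | [] | [_] => by simp [pathCost]
  | a :: b :: l => by
    rw [pathCost_cons_cons, pathCost_cons_cons, pathCost_delCost c P Δ (b :: l),
      List.dropLast_cons_cons, List.countP_cons]
    by_cases ha : a ∈ P <;> simp [delCost, ha] <;> ring

lemma pathCost_delCost_of_forall_notMem {c : V → V → ℝ} {P : Set V} {Δ : ℝ} {l : List V}
    (hl : ∀ x ∈ l.dropLast, x ∉ P) : pathCost (delCost c P Δ) l = pathCost c l := by
  rw [pathCost_delCost, List.countP_eq_zero.mpr fun x hx => by simpa using hl x hx]
  simp

open Classical in
lemma pathCost_add_le_pathCost_delCost {c : V → V → ℝ} {P : Set V} {Δ : ℝ} (hΔ : 0 ≤ Δ)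
    {l : List V} {x : V} (hx : x ∈ l.dropLast) (hxP : x ∈ P) :
    pathCost c l + Δ ≤ pathCost (delCost c P Δ) l := by
  have hcount : 1 ≤ l.dropLast.countP (· ∈ P) := List.countP_pos_iff.mpr ⟨x, hx, by simpa⟩
  rw [pathCost_delCost]
  gcongr
  exact le_mul_of_one_le_left hΔ (mod_cast hcount)

lemma List.IsChain.forall_mem_dropLast {R : V → V → Prop} {p : V → Prop}
    (hR : ∀ u v, R u v → p u) {l : List V} (hl : l.IsChain R) : ∀ x ∈ l.dropLast, p x :=
  ((List.forall₂_and_left _ _).mp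
    ((List.isChain_iff_forall₂.mp hl).imp fun u v huv => ⟨hR u v huv, huv⟩)).1

lemma List.IsChain.induce {A : V → V → Prop} {S : Set V} {l : List V} (hA : l.IsChain A)
    (hS : ∀ x ∈ l, x ∉ S) : l.IsChain fun u v => A u v ∧ u ∉ S ∧ v ∉ S :=
  hA.imp_of_mem_imp fun _ _ hu hv huv => ⟨huv, hS _ hu, hS _ hv⟩

lemma le_gdist_iff {A : V → V → Prop} {c : V → V → ℝ} {u v : V} {x : ℝ≥0∞} :
    x ≤ gdist A c u v ↔ ∀ l, IsPathFrom A u v l → x ≤ ENNReal.ofReal (pathCost c l) := by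
  simp [gdist, le_iInf_iff]

end

theorem delayed_dist_ge_iff_deleted_dist_ge_general {V : Type*} (A : V → V → Prop)
    (t : V → V → ℝ) (hpos : ∀ u v, A u v → 0 < t u v)
    (s tv : V) (h : ℝ) (hh : 0 < h)
    (S : Set V) (ht : tv ∉ S) :
    ENNReal.ofReal h ≤ gdist A (delCost t S h) s tv ↔
    ENNReal.ofReal h ≤ gdist (fun u v => A u v ∧ u ∉ S ∧ v ∉ S) t s tv := by
  simp only [le_gdist_iff]
  constructor
  · rintro H l ⟨hhead, hlast, hl⟩
    rw [← pathCost_delCost_of_forall_notMem (hl.forall_mem_dropLast fun _ _ huv => huv.2.1)]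
    exact H l ⟨hhead, hlast, hl.imp fun _ _ huv => huv.1⟩
  · rintro H l ⟨hhead, hlast, hl⟩
    by_cases hS : ∃ x ∈ l, x ∈ S
    · obtain ⟨x, hxl, hxS⟩ := hS
      have hx : x ∈ l.dropLast :=
        List.mem_dropLast_of_mem_of_ne_getLast? hxl (by rw [hlast]; rintro ⟨⟩; exact ht hxS)
      refine ENNReal.ofReal_le_ofReal ?_
      have hdelay := pathCost_add_le_pathCost_delCost (c := t) hh.le hx hxS
      have hcost := pathCost_nonneg (fun u v huv => (hpos u v huv).le) hl
      linarith
    · have hS : ∀ x ∈ l, x ∉ S := fun x hx hxS => hS ⟨x, hx, hxS⟩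
      rw [pathCost_delCost_of_forall_notMem fun x hx => hS x (List.mem_of_mem_dropLast hx)]
      exact H l ⟨hhead, hlast, hl.induce hS⟩

/-- with delay `Δ = h` on outgoing arcs of protected vertices `S`,
the delayed arrival time at `t` is at least `h` iff the shortest `s`–`t` path in
the vertex-deleted subgraph `G \ S` has cost at least `h`. -/
theorem delayed_dist_ge_iff_deleted_dist_ge {V : Type*} (A : V → V → Prop)
    (t : V → V → ℝ) (hpos : ∀ u v, A u v → 0 < t u v)
    (s tv : V) (h : ℝ) (hh : 0 < h)
    (S : Set V) (hs : s ∉ S) (ht : tv ∉ S) :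
    ENNReal.ofReal h ≤ gdist A (delCost t S h) s tv ↔
    ENNReal.ofReal h ≤ gdist (fun u v => A u v ∧ u ∉ S ∧ v ∉ S) t s tv :=
  delayed_dist_ge_iff_deleted_dist_ge_general A t hpos s tv h hh S ht
end

section
/- Conversely, in the MVNP-to-WSP reduction, if an allocation Λ in the constructed graph Ĝ satisfies that at most |V| − 1 vertices have delayed arrival time less than h, then for S = P^Λ ∩ V, the shortest s–t path in G \ S has cost at least h. -/
open scoped ENNReal

/-- Arc relation of the graph `Ĝ` of the MVNP-to-WSP reduction: the sink `t` is
replaced, for each predecessor `v` of `t` lying on an `s`–`t` path of cost `< h`,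
by `|V|` leaf vertices `Sum.inr (v, i)` (`i : V`), each reached from `v` by an arc
of cost `t_{vt}`. -/
noncomputable def hatArc {V : Type*} (A : V → V → Prop) (c : V → V → ℝ)
    (s tv : V) (h : ℝ) : (V ⊕ V × V) → (V ⊕ V × V) → Prop
  | Sum.inl x, Sum.inl y => A x y ∧ x ≠ tv ∧ y ≠ tv
  | Sum.inl x, Sum.inr q =>
      x = q.1 ∧ A q.1 tv ∧ gdist A c s q.1 + ENNReal.ofReal (c q.1 tv) < ENNReal.ofReal h
  | _, _ => False

/-- Arc costs of the reduction graph `Ĝ`. -/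
noncomputable def hatCost {V : Type*} (c : V → V → ℝ) (tv : V) :
    (V ⊕ V × V) → (V ⊕ V × V) → ℝ
  | Sum.inl x, Sum.inl y => c x y
  | Sum.inl x, Sum.inr _ => c x tv
  | _, _ => 0


/-!
Suppose `G \ S` had an `s`–`t` path of cost `< h`. Cut it just before its first visit to `t`,
at a vertex `q`. The prefix avoids `S`, so lifted to `Ĝ` it carries no delay, and its cost plus
`t_{qt}` is `< h`; in particular `q` is a predecessor of `t` for which the leaves `(q, i)` exist.
Each of these `|V|` leaves is then reached before time `h`, contradicting that at most `|V| - 1`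
vertices burn.
-/

section Paths

variable {V W : Type*} {R : V → V → Prop} {c c' : V → V → ℝ}

@[simp]
lemma pathCost_nil : pathCost c [] = 0 := rfl

@[simp]
lemma pathCost_singleton (a : V) : pathCost c [a] = 0 := rfl

lemma pathCost_cons_of_head? {a b : V} {l : List V} (hb : l.head? = some b) :
    pathCost c (a :: l) = c a b + pathCost c l := by
  cases l with
  | nil => simp at hb
  | cons b' l =>
    obtain rfl : b' = b := by simpa using hb
    simp [pathCost]

lemma pathCost_append_singleton {l : List V} {q : V} (hq : l.getLast? = some q) (w : V) :
    pathCost c (l ++ [w]) = pathCost c l + c q w := by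
  induction l with
  | nil => simp at hq
  | cons a l ih =>
    cases l with
    | nil =>
      obtain rfl : a = q := by simpa using hq
      simp [pathCost_cons_of_head? (l := [w]) rfl]
    | cons b l =>
      rw [List.getLast?_cons_cons] at hq
      rw [List.cons_append, pathCost_cons_of_head? rfl, pathCost_cons_of_head? (l := b :: l) rfl,
        ih hq, add_assoc]

lemma pathCost_map (f : W → V) (l : List W) :
    pathCost c (l.map f) = pathCost (fun a b => c (f a) (f b)) l := by
  induction l with
  | nil => rfl
  | cons a l ih =>
    cases l with
    | nil => rfl
    | cons b l => rw [List.map_cons, pathCost_cons_of_head? rfl, pathCost_cons_of_head? rfl, ih]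

lemma pathCost_congr {l : List V} (h : ∀ a ∈ l, ∀ b, c a b = c' a b) :
    pathCost c l = pathCost c' l := by
  simp only [pathCost]
  congr 1
  refine List.map_congr_left fun p hp => h _ ?_ _
  exact List.of_mem_zip hp |>.1

lemma pathCost_nonneg_s11 (hc : ∀ a b, R a b → 0 ≤ c a b) {l : List V} (hl : l.IsChain R) :
    0 ≤ pathCost c l := by
  induction l with
  | nil => simp
  | cons a l ih =>
    cases l with
    | nil => simp
    | cons b l =>
      have hl : R a b ∧ (b :: l).IsChain R := List.isChain_cons_cons.mp hl
      rw [pathCost_cons_of_head? rfl]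
      exact add_nonneg (hc a b hl.1) (ih hl.2)

namespace IsPathFrom

variable {R' : W → W → Prop} {u v q : V} {l : List V}

lemma cons {a : V} (hl : IsPathFrom R u v l) (ha : R a u) : IsPathFrom R a v (a :: l) := by
  obtain ⟨hhead, hlast, hchain⟩ := hl
  cases l with
  | nil => simp at hhead
  | cons b l =>
    obtain rfl : b = u := by simpa using hhead
    exact ⟨rfl, by rwa [List.getLast?_cons_cons], List.isChain_cons_cons.mpr ⟨ha, hchain⟩⟩

lemma append_singleton (hl : IsPathFrom R u q l) {w : V} (hw : R q w) :
    IsPathFrom R u w (l ++ [w]) := by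
  obtain ⟨hhead, hlast, hchain⟩ := hl
  refine ⟨by rwa [List.head?_append_of_ne_nil _ (by rintro rfl; simp at hlast)],
    List.getLast?_concat, ?_⟩
  refine List.isChain_append.mpr ⟨hchain, List.isChain_singleton w, ?_⟩
  simp [hlast, hw]

lemma map_of_mem (hl : IsPathFrom R u v l) (f : V → W)
    (hf : ∀ a ∈ l, ∀ b ∈ l, R a b → R' (f a) (f b)) : IsPathFrom R' (f u) (f v) (l.map f) := by
  obtain ⟨hhead, hlast, hchain⟩ := hl
  refine ⟨by simp [hhead], by simp [hlast], ?_⟩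
  exact List.isChain_map f |>.mpr (hchain.imp_of_mem_imp fun a b ha hb => hf a ha b hb)

lemma mono {S : V → V → Prop} (hl : IsPathFrom R u v l) (hRS : ∀ a b, R a b → S a b) :
    IsPathFrom S u v l :=
  ⟨hl.1, hl.2.1, hl.2.2.imp hRS⟩

lemma forall_mem {P : V → Prop} (hl : IsPathFrom R u v l) (hP : ∀ a b, R a b → P a)
    (hv : P v) : ∀ x ∈ l, P x :=
  hl.2.2.backwards_induction P l (fun a b hab _ => hP a b hab)
    fun hne => by rwa [List.getLast_eq_iff_getLast?_eq_some hne |>.mpr hl.2.1]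

lemma gdist_le (hl : IsPathFrom R u v l) : gdist R c u v ≤ ENNReal.ofReal (pathCost c l) :=
  iInf_le (fun l : {l // IsPathFrom R u v l} => ENNReal.ofReal (pathCost c l)) ⟨l, hl⟩

lemma exists_last_arc_before_first_hit (hc : ∀ a b, R a b → 0 ≤ c a b)
    (hl : IsPathFrom R u v l) (huv : u ≠ v) :
    ∃ m q, IsPathFrom R u q m ∧ R q v ∧ v ∉ m ∧ pathCost c m + c q v ≤ pathCost c l := by
  induction l generalizing u with
  | nil => simp [IsPathFrom] at hl
  | cons a l ih =>
    obtain ⟨hhead, hlast, hchain⟩ := hl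
    obtain rfl : a = u := by simpa using hhead
    cases l with
    | nil => exact absurd (by simpa using hlast) huv
    | cons b l =>
      have hub : R a b ∧ (b :: l).IsChain R := List.isChain_cons_cons.mp hchain
      have htail : IsPathFrom R b v (b :: l) :=
        ⟨rfl, by rwa [List.getLast?_cons_cons] at hlast, hub.2⟩
      rw [pathCost_cons_of_head? rfl]
      by_cases hbv : b = v
      · subst hbv
        refine ⟨[a], a, ⟨rfl, rfl, List.isChain_singleton a⟩, hub.1,
          by simpa [eq_comm] using huv, ?_⟩
        simpa using pathCost_nonneg_s11 hc hub.2
      · obtain ⟨m, q, hm, hq, hvm, hcost⟩ := ih htail hbv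
        refine ⟨a :: m, q, hm.cons hub.1, hq, by simp [huv.symm, hvm], ?_⟩
        rw [pathCost_cons_of_head? hm.1]
        linarith

end IsPathFrom

lemma exists_isPathFrom_of_gdist_lt {u v : V} {r : ℝ≥0∞} (h : gdist R c u v < r) :
    ∃ l, IsPathFrom R u v l ∧ ENNReal.ofReal (pathCost c l) < r := by
  obtain ⟨⟨l, hl⟩, hlr⟩ := iInf_lt_iff.mp h
  exact ⟨l, hl, hlr⟩

end Paths

section Reduction

variable {V : Type*} {A : V → V → Prop} {t : V → V → ℝ} {s tv q : V} {h : ℝ}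
  {Phat : Set (V ⊕ V × V)} {m : List V}

lemma gdist_hatArc_leaf_le (hm : IsPathFrom A s q m) (htv : tv ∉ m)
    (hmP : ∀ x ∈ m, Sum.inl x ∉ Phat) (hq : A q tv)
    (hleaf : gdist A t s q + ENNReal.ofReal (t q tv) < ENNReal.ofReal h) (i : V) :
    gdist (hatArc A t s tv h) (delCost (hatCost t tv) Phat h) (Sum.inl s) (Sum.inr (q, i)) ≤
      ENNReal.ofReal (pathCost t m + t q tv) := by
  have hlift : IsPathFrom (hatArc A t s tv h) (Sum.inl s) (Sum.inl q) (m.map Sum.inl) :=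
    hm.map_of_mem Sum.inl fun a ha b hb hab =>
      ⟨hab, ne_of_mem_of_not_mem ha htv, ne_of_mem_of_not_mem hb htv⟩
  have hcost : pathCost (delCost (hatCost t tv) Phat h) (m.map Sum.inl ++ [Sum.inr (q, i)]) =
      pathCost t m + t q tv := by
    rw [pathCost_append_singleton hlift.2.1, pathCost_map]
    have hq : Sum.inl q ∉ Phat := hmP q (List.mem_of_getLast? hm.2.1)
    rw [pathCost_congr (c' := t) fun a ha b => by simp [delCost, hatCost, hmP a ha]]
    simp [delCost, hatCost, hq]
  rw [← hcost]
  exact (hlift.append_singleton (w := Sum.inr (q, i)) ⟨rfl, hq, hleaf⟩).gdist_le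

end Reduction

theorem reduction_converse_general {V : Type*} [Fintype V] (A : V → V → Prop)
    (t : V → V → ℝ) (hpos : ∀ u v, A u v → 0 < t u v)
    (s tv : V) (hstv : s ≠ tv) (h : ℝ)
    (Phat : Set (V ⊕ V × V))
    (hburn : Set.ncard {x : V ⊕ V × V |
        gdist (hatArc A t s tv h) (delCost (hatCost t tv) Phat h) (Sum.inl s) x <
          ENNReal.ofReal h} ≤ Fintype.card V - 1) :
    ENNReal.ofReal h ≤
      gdist (fun u v => A u v ∧ u ∉ {w : V | Sum.inl w ∈ Phat} ∧
          v ∉ {w : V | Sum.inl w ∈ Phat}) t s tv := by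
  by_contra! hlt
  obtain ⟨l, hl, hl_cost⟩ := exists_isPathFrom_of_gdist_lt hlt
  obtain ⟨m, q, hm, hq, htv, hm_cost⟩ :=
    hl.exists_last_arc_before_first_hit (fun u v huv => (hpos u v huv.1).le) hstv
  have hmP : ∀ x ∈ m, Sum.inl x ∉ Phat := hm.forall_mem (fun _ _ hab => hab.2.1) hq.2.1
  have hmA : IsPathFrom A s q m := hm.mono fun _ _ hab => hab.1
  have hcost : ENNReal.ofReal (pathCost t m + t q tv) < ENNReal.ofReal h :=
    (ENNReal.ofReal_le_ofReal hm_cost).trans_lt hl_cost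
  have hleaf : gdist A t s q + ENNReal.ofReal (t q tv) < ENNReal.ofReal h := by
    refine lt_of_le_of_lt ?_ hcost
    rw [ENNReal.ofReal_add (pathCost_nonneg_s11 (fun u v huv => (hpos u v huv).le) hmA.2.2)
      (hpos q tv hq.1).le]
    exact add_le_add_left hmA.gdist_le _
  -- all `|V|` leaves hanging off `q` burn before time `h`
  have hcard := Set.ncard_le_ncard_of_injOn (s := Set.univ)
    (t := {x | gdist (hatArc A t s tv h) (delCost (hatCost t tv) Phat h) (Sum.inl s) x <
      ENNReal.ofReal h}) (fun i : V => Sum.inr (q, i))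
    (fun i _ => (gdist_hatArc_leaf_le hmA htv hmP hq.1 hleaf i).trans_lt hcost)
    (fun i _ j _ hij => by simpa using hij)
  rw [Set.ncard_univ, Nat.card_eq_fintype_card] at hcard
  have : 0 < Fintype.card V := Fintype.card_pos_iff.mpr ⟨s⟩
  omega

/-- conversely, if an allocation with protected set `P̂` in the
reduction graph `Ĝ` burns at most `|V| - 1` vertices before time `h`, then for
`S = P̂ ∩ V` the shortest `s`–`t` path in `G \ S` has cost at least `h`. -/
theorem reduction_converse {V : Type*} [Fintype V] (A : V → V → Prop)
    (t : V → V → ℝ) (hpos : ∀ u v, A u v → 0 < t u v)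
    (s tv : V) (hstv : s ≠ tv) (h : ℝ) (hh : 0 < h)
    (Phat : Set (V ⊕ V × V))
    (hburn : Set.ncard {x : V ⊕ V × V |
        gdist (hatArc A t s tv h) (delCost (hatCost t tv) Phat h) (Sum.inl s) x <
          ENNReal.ofReal h} ≤ Fintype.card V - 1) :
    ENNReal.ofReal h ≤
      gdist (fun u v => A u v ∧ u ∉ {w : V | Sum.inl w ∈ Phat} ∧
          v ∉ {w : V | Sum.inl w ∈ Phat}) t s tv :=
  reduction_converse_general A t hpos s tv hstv h Phat hburn
end
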